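/- (Theorem 1, bias-variance trade-off of rank-r approximation.) Suppose A = U Σ Vᵀ is a singular value decomposition of a real d×d matrix with rank k, (A, b) satisfies the discrete Picard condition with parameter p > 1, and w* = Σ_{j=1}^k σ_j⁻¹ v_j (u_jᵀ b). Suppose A_t = Û Σ̂ V̂ᵀ with Û, V̂ orthogonal, singular values σ̂₁ ≥ … ≥ σ̂_d ≥ 0 and σ̂_r > 0, let b_t ∈ ℝ^d and let w_{t,r} = A_{t,r}† b_t be the rank-r truncated solution. Define ε = min( k·σ₁^{p−1}, Σ_{j=1}^k ‖σ_j^{p−1} v_j − σ̂_j^{p−1} v̂_j‖₂ + σ̂_r^{p−1} − σ_r^{p−1} ). Then ‖w_{t,r} − w*‖₂ ≤ (1/σ̂_r)·‖b_t − A_t w*‖₂ + (d − r)·ε + (d − r)·σ_r^{p−1}. -/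

import Mathlib

open Matrix Finset

/-- The Euclidean (ℓ2) norm on `ℝ^d`. -/
noncomputable def enormL2 {d : ℕ} (x : Fin d → ℝ) : ℝ :=
  Real.sqrt (∑ i, x i ^ 2)

section helpers

lemma enorm_eq_norm {d : ℕ} (x : Fin d → ℝ) :
    enormL2 x = ‖(WithLp.equiv 2 (Fin d → ℝ)).symm x‖ := by
  rw [EuclideanSpace.norm_eq]
  simp [enormL2, sq_abs]

lemma enorm_nonneg' {d : ℕ} (x : Fin d → ℝ) : 0 ≤ enormL2 x := Real.sqrt_nonneg _

lemma enormL2_add_le {d : ℕ} (x y : Fin d → ℝ) : enormL2 (x + y) ≤ enormL2 x + enormL2 y := by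
  simp only [enorm_eq_norm]
  rw [WithLp.equiv_symm_apply, WithLp.toLp_add]
  exact norm_add_le _ _

lemma enorm_eq_sqrt_dot {d : ℕ} (x : Fin d → ℝ) : enormL2 x = Real.sqrt (x ⬝ᵥ x) := by
  simp [enormL2, dotProduct, sq]

lemma abs_dot_le {d : ℕ} (x y : Fin d → ℝ) : |x ⬝ᵥ y| ≤ enormL2 x * enormL2 y := by
  simp only [enorm_eq_norm]
  have := abs_real_inner_le_norm ((WithLp.equiv 2 (Fin d → ℝ)).symm x)
    ((WithLp.equiv 2 (Fin d → ℝ)).symm y)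
  rwa [show (inner ℝ ((WithLp.equiv 2 (Fin d → ℝ)).symm x)
      ((WithLp.equiv 2 (Fin d → ℝ)).symm y) : ℝ) = x ⬝ᵥ y by
    simp [PiLp.inner_apply, dotProduct, mul_comm]] at this

lemma enorm_mulVec_orth {d : ℕ} (M : Matrix (Fin d) (Fin d) ℝ) (h : Mᵀ * M = 1)
    (x : Fin d → ℝ) : enormL2 (M.mulVec x) = enormL2 x := by
  rw [enorm_eq_sqrt_dot, enorm_eq_sqrt_dot]
  congr 1
  rw [Matrix.dotProduct_mulVec, ← Matrix.mulVec_transpose, Matrix.mulVec_mulVec, h,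
    Matrix.one_mulVec]

lemma col_dot_col {d : ℕ} (M : Matrix (Fin d) (Fin d) ℝ) (h : Mᵀ * M = 1) (i j : Fin d) :
    (fun l => M l i) ⬝ᵥ (fun l => M l j) = if i = j then 1 else 0 := by
  have := congrFun (congrFun h i) j
  simpa [Matrix.mul_apply, Matrix.one_apply, dotProduct] using this

lemma enorm_col {d : ℕ} (M : Matrix (Fin d) (Fin d) ℝ) (h : Mᵀ * M = 1) (i : Fin d) :
    enormL2 (fun l => M l i) = 1 := by
  rw [enorm_eq_sqrt_dot, col_dot_col M h i i]
  simp

lemma enorm_diag_le {d : ℕ} (c : Fin d → ℝ) (C : ℝ) (hC : 0 ≤ C)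
    (hc : ∀ i, |c i| ≤ C) (x : Fin d → ℝ) :
    enormL2 ((Matrix.diagonal c).mulVec x) ≤ C * enormL2 x := by
  rw [enormL2, enormL2, ← Real.sqrt_sq hC, ← Real.sqrt_mul (by positivity)]
  apply Real.sqrt_le_sqrt
  rw [Finset.mul_sum]
  apply Finset.sum_le_sum
  intro i _
  rw [Matrix.mulVec_diagonal, mul_pow]
  have h1 : c i ^ 2 ≤ C ^ 2 := by
    rw [← sq_abs (c i)]
    exact pow_le_pow_left₀ (abs_nonneg _) (hc i) 2
  exact mul_le_mul_of_nonneg_right h1 (sq_nonneg _)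

lemma sqrt_sum_sq_le_sum_abs {d : ℕ} (s : Finset (Fin d)) (f : Fin d → ℝ) :
    Real.sqrt (∑ i ∈ s, f i ^ 2) ≤ ∑ i ∈ s, |f i| := by
  rw [show ∑ i ∈ s, |f i| = Real.sqrt ((∑ i ∈ s, |f i|) ^ 2) by
    rw [Real.sqrt_sq (Finset.sum_nonneg fun i _ => abs_nonneg _)]]
  apply Real.sqrt_le_sqrt
  calc ∑ i ∈ s, f i ^ 2 = ∑ i ∈ s, |f i| * |f i| := by
        refine Finset.sum_congr rfl fun i _ => ?_
        rw [abs_mul_abs_self, sq]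
    _ ≤ ∑ i ∈ s, |f i| * (∑ j ∈ s, |f j|) := by
        refine Finset.sum_le_sum fun i hi => ?_
        exact mul_le_mul_of_nonneg_left
          (Finset.single_le_sum (fun j _ => abs_nonneg (f j)) hi) (abs_nonneg _)
    _ = (∑ i ∈ s, |f i|) ^ 2 := by rw [← Finset.sum_mul, sq]

lemma card_filter_lt' (d k : ℕ) (hkd : k ≤ d) :
    (Finset.univ.filter (fun j : Fin d => (j : ℕ) < k)).card = k := by
  have : (Finset.univ.filter (fun j : Fin d => (j : ℕ) < k)) =
      (Finset.range k).attachFin (fun m hm => lt_of_lt_of_le (Finset.mem_range.mp hm) hkd) := by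
    ext j; simp
  rw [this, Finset.card_attachFin, Finset.card_range]

lemma card_filter_not_lt' (d r : ℕ) (hrd : r ≤ d) :
    (Finset.univ.filter (fun j : Fin d => ¬ (j : ℕ) < r)).card = d - r := by
  have h := Finset.card_filter_add_card_filter_not (s := (Finset.univ : Finset (Fin d)))
    (p := fun j : Fin d => (j : ℕ) < r)
  rw [card_filter_lt' d r hrd, Finset.card_univ, Fintype.card_fin] at h
  omega

lemma dotProduct_finset_sum {d m : ℕ} (x : Fin d → ℝ) (S : Finset (Fin m))
    (f : Fin m → Fin d → ℝ) :
    x ⬝ᵥ (∑ j ∈ S, f j) = ∑ j ∈ S, x ⬝ᵥ f j := by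
  simp only [dotProduct, Finset.sum_apply, Finset.mul_sum]
  rw [Finset.sum_comm]

end helpers

/-- Theorem 1, bias-variance trade-off of rank-`r` approximation:
With `A = U Σ Vᵀ` an SVD of rank `k` satisfying the discrete Picard condition
with parameter `p > 1`, `w* = ∑_{j=1}^k σ_j⁻¹ v_j (u_jᵀ b)`,
`A_t = Û Σ̂ V̂ᵀ` with `σ̂₁ ≥ … ≥ σ̂_d ≥ 0` and `σ̂_r > 0`,
`w_{t,r} = A_{t,r}† b_t` the rank-`r` truncated solution, and
`ε = min(k σ₁^{p−1}, ∑_{j=1}^k ‖σ_j^{p−1} v_j − σ̂_j^{p−1} v̂_j‖₂ + σ̂_r^{p−1} − σ_r^{p−1})`,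
we have
`‖w_{t,r} − w*‖₂ ≤ (1/σ̂_r) ‖b_t − A_t w*‖₂ + (d − r) ε + (d − r) σ_r^{p−1}`. -/
theorem bias_variance_tradeoff_rank_r
    (d r : ℕ) (hd : 1 ≤ d) (hr1 : 1 ≤ r) (hrd : r ≤ d)
    (U V : Matrix (Fin d) (Fin d) ℝ)
    (hU : Uᵀ * U = 1 ∧ U * Uᵀ = 1)
    (hV : Vᵀ * V = 1 ∧ V * Vᵀ = 1)
    (σ : Fin d → ℝ)
    (hσanti : ∀ i j : Fin d, i ≤ j → σ j ≤ σ i)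
    (hσnonneg : ∀ i : Fin d, 0 ≤ σ i)
    (A : Matrix (Fin d) (Fin d) ℝ)
    (hA : A = U * Matrix.diagonal σ * Vᵀ)
    (k : ℕ) (hkd : k ≤ d)
    (hrank : ∀ i : Fin d, (0 < σ i ↔ (i : ℕ) < k))
    (b : Fin d → ℝ) (p : ℝ) (hp : 1 < p)
    -- the discrete Picard condition: |u_iᵀ b| ≤ σ_i^p for i = 1,…,k and
    -- |u_iᵀ b| ≤ σ_k^p for i = k+1,…,d
    (hPicard₁ : ∀ i : Fin d, (i : ℕ) < k → |(fun l => U l i) ⬝ᵥ b| ≤ σ i ^ p)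
    (hPicard₂ : ∀ i j : Fin d, k ≤ (i : ℕ) → (j : ℕ) + 1 = k →
      |(fun l => U l i) ⬝ᵥ b| ≤ σ j ^ p)
    (wstar : Fin d → ℝ)
    (hwstar : wstar = ∑ j ∈ Finset.univ.filter (fun j : Fin d => (j : ℕ) < k),
      ((σ j)⁻¹ * ((fun l => U l j) ⬝ᵥ b)) • (fun l => V l j))
    (Uhat Vhat : Matrix (Fin d) (Fin d) ℝ)
    (hUhat : Uhatᵀ * Uhat = 1 ∧ Uhat * Uhatᵀ = 1)
    (hVhat : Vhatᵀ * Vhat = 1 ∧ Vhat * Vhatᵀ = 1)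
    (σhat : Fin d → ℝ)
    (hσhatanti : ∀ i j : Fin d, i ≤ j → σhat j ≤ σhat i)
    (hσhatnonneg : ∀ i : Fin d, 0 ≤ σhat i)
    (hσhatr : 0 < σhat ⟨r - 1, by omega⟩)
    (At : Matrix (Fin d) (Fin d) ℝ)
    (hAt : At = Uhat * Matrix.diagonal σhat * Vhatᵀ)
    (Apinv : Matrix (Fin d) (Fin d) ℝ)
    (hApinv : Apinv = Vhat *
      Matrix.diagonal (fun i : Fin d => if (i : ℕ) < r then (σhat i)⁻¹ else 0) * Uhatᵀ)
    (bt : Fin d → ℝ)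
    (wtr : Fin d → ℝ) (hwtr : wtr = Apinv.mulVec bt)
    (ε : ℝ)
    (hε : ε = min ((k : ℝ) * σ ⟨0, by omega⟩ ^ (p - 1))
      ((∑ j ∈ Finset.univ.filter (fun j : Fin d => (j : ℕ) < k),
          enormL2 ((σ j ^ (p - 1)) • (fun l => V l j) -
                 (σhat j ^ (p - 1)) • (fun l => Vhat l j))) +
        σhat ⟨r - 1, by omega⟩ ^ (p - 1) - σ ⟨r - 1, by omega⟩ ^ (p - 1))) :
    enormL2 (wtr - wstar) ≤
      (1 / σhat ⟨r - 1, by omega⟩) * enormL2 (bt - At.mulVec wstar) +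
        ((d : ℝ) - (r : ℝ)) * ε +
        ((d : ℝ) - (r : ℝ)) * σ ⟨r - 1, by omega⟩ ^ (p - 1) := by
  have hp1 : (0:ℝ) ≤ p - 1 := by linarith
  set ir : Fin d := ⟨r - 1, by omega⟩ with hir
  have hσr : 0 < σhat ir := hσhatr
  set S := Finset.univ.filter (fun j : Fin d => (j : ℕ) < k) with hS
  set c : Fin d → ℝ := fun i => if (i : ℕ) < r then (σhat i)⁻¹ else 0 with hc
  -- z = V̂ᵀ w*
  set z : Fin d → ℝ := Vhatᵀ.mulVec wstar with hz
  have hUhatT : (Uhatᵀ)ᵀ * Uhatᵀ = 1 := by rw [Matrix.transpose_transpose]; exact hUhat.2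
  -- Step B : pseudo-inverse contraction
  have hB : ∀ y : Fin d → ℝ, enormL2 (Apinv.mulVec y) ≤ (1 / σhat ir) * enormL2 y := by
    intro y
    have : Apinv.mulVec y = Vhat.mulVec ((Matrix.diagonal c).mulVec (Uhatᵀ.mulVec y)) := by
      rw [hApinv, ← Matrix.mulVec_mulVec, ← Matrix.mulVec_mulVec]
    rw [this, enorm_mulVec_orth Vhat hVhat.1]
    calc enormL2 ((Matrix.diagonal c).mulVec (Uhatᵀ.mulVec y))
        ≤ (1 / σhat ir) * enormL2 (Uhatᵀ.mulVec y) := by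
          apply enorm_diag_le
          · positivity
          · intro i
            rw [hc]
            by_cases hi : (i : ℕ) < r
            · simp only [hi, if_true]
              have hle : σhat ir ≤ σhat i := by
                apply hσhatanti
                rw [Fin.le_def]
                simp only [hir]
                omega
              rw [abs_of_nonneg (inv_nonneg.mpr (hσhatnonneg i)), one_div]
              exact inv_anti₀ hσr hle
            · simp only [hi, if_false, abs_zero]
              positivity
      _ = (1 / σhat ir) * enormL2 y := by rw [enorm_mulVec_orth Uhatᵀ hUhatT]
  -- Step C : the projection identity
  have hproj : Apinv * At = Vhat * Matrix.diagonal (fun i =>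
      c i * σhat i) * Vhatᵀ := by
    rw [hApinv, hAt]
    simp only [Matrix.mul_assoc]
    rw [← Matrix.mul_assoc Uhatᵀ Uhat, hUhat.1, Matrix.one_mul,
      ← Matrix.mul_assoc (Matrix.diagonal c), Matrix.diagonal_mul_diagonal]
  have hCterm : Apinv.mulVec (At.mulVec wstar) - wstar
      = Vhat.mulVec (fun i => (c i * σhat i - 1) * z i) := by
    have hdg : (Matrix.diagonal (fun i => c i * σhat i)).mulVec z
        = fun i => (c i * σhat i) * z i := by
      funext i
      rw [Matrix.mulVec_diagonal]
    have h1 : Apinv.mulVec (At.mulVec wstar) = Vhat.mulVec (fun i => (c i * σhat i) * z i) := by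
      rw [Matrix.mulVec_mulVec, hproj, ← Matrix.mulVec_mulVec, ← Matrix.mulVec_mulVec, ← hz, hdg]
    have h2 : wstar = Vhat.mulVec z := by
      rw [hz, Matrix.mulVec_mulVec, hVhat.2, Matrix.one_mulVec]
    have haux : (fun i => c i * σhat i * z i) - z = fun i => (c i * σhat i - 1) * z i := by
      funext i
      simp only [Pi.sub_apply, sub_mul, one_mul]
    rw [h1]
    conv_lhs => rw [h2]
    rw [← Matrix.mulVec_sub, haux]
  -- per-coordinate bound
  have hzi : ∀ i : Fin d, z i = (fun l => Vhat l i) ⬝ᵥ wstar := by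
    intro i
    simp [hz, Matrix.mulVec, dotProduct, Matrix.transpose_apply]
  have hzsum : ∀ i : Fin d, z i = ∑ j ∈ S,
      ((σ j)⁻¹ * ((fun l => U l j) ⬝ᵥ b)) * ((fun l => Vhat l i) ⬝ᵥ (fun l => V l j)) := by
    intro i
    rw [hzi, hwstar, dotProduct_finset_sum]
    refine Finset.sum_congr rfl fun j _ => ?_
    rw [dotProduct_smul, smul_eq_mul]
  -- bounds for j ∈ S
  have hcj : ∀ j ∈ S, |(σ j)⁻¹ * ((fun l => U l j) ⬝ᵥ b)| ≤ σ j ^ (p - 1) := by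
    intro j hj
    have hjk : (j : ℕ) < k := by simpa [hS] using hj
    have hσj : 0 < σ j := (hrank j).mpr hjk
    rw [abs_mul, abs_of_nonneg (inv_nonneg.mpr (le_of_lt hσj))]
    calc (σ j)⁻¹ * |(fun l => U l j) ⬝ᵥ b| ≤ (σ j)⁻¹ * σ j ^ p := by
          exact mul_le_mul_of_nonneg_left (hPicard₁ j hjk) (inv_nonneg.mpr (le_of_lt hσj))
      _ = σ j ^ (p - 1) := by
          rw [show p = (p - 1) + 1 by ring, Real.rpow_add hσj, Real.rpow_one]
          field_simp
          rw [show p - 1 + 1 - 1 = p - 1 by ring]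
  have hdot1 : ∀ i j : Fin d, |(fun l => Vhat l i) ⬝ᵥ (fun l => V l j)| ≤ 1 := by
    intro i j
    have := abs_dot_le (fun l => Vhat l i) (fun l => V l j)
    rwa [enorm_col Vhat hVhat.1, enorm_col V hV.1, one_mul] at this
  -- Bound A
  have hzA : ∀ i : Fin d, |z i| ≤ (k : ℝ) * σ ⟨0, by omega⟩ ^ (p - 1) := by
    intro i
    rw [hzsum]
    calc |∑ j ∈ S, ((σ j)⁻¹ * ((fun l => U l j) ⬝ᵥ b)) *
          ((fun l => Vhat l i) ⬝ᵥ (fun l => V l j))|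
        ≤ ∑ j ∈ S, |((σ j)⁻¹ * ((fun l => U l j) ⬝ᵥ b)) *
          ((fun l => Vhat l i) ⬝ᵥ (fun l => V l j))| := Finset.abs_sum_le_sum_abs _ _
      _ ≤ ∑ j ∈ S, σ ⟨0, by omega⟩ ^ (p - 1) := by
          refine Finset.sum_le_sum fun j hj => ?_
          rw [abs_mul]
          calc |(σ j)⁻¹ * ((fun l => U l j) ⬝ᵥ b)| * |(fun l => Vhat l i) ⬝ᵥ (fun l => V l j)|
              ≤ σ j ^ (p - 1) * 1 :=
                mul_le_mul (hcj j hj) (hdot1 i j) (abs_nonneg _)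
                  (Real.rpow_nonneg (hσnonneg j) _)
            _ = σ j ^ (p - 1) := mul_one _
            _ ≤ σ ⟨0, by omega⟩ ^ (p - 1) := by
                apply Real.rpow_le_rpow (hσnonneg j) _ hp1
                apply hσanti
                rw [Fin.le_def]
                exact Nat.zero_le _
      _ = (k : ℝ) * σ ⟨0, by omega⟩ ^ (p - 1) := by
          rw [Finset.sum_const, nsmul_eq_mul, hS, card_filter_lt' d k hkd]
  -- Bound B
  have hzB : ∀ i : Fin d, ¬ (i : ℕ) < r →
      |z i| ≤ (∑ j ∈ S, enormL2 ((σ j ^ (p - 1)) • (fun l => V l j) -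
        (σhat j ^ (p - 1)) • (fun l => Vhat l j))) + σhat ir ^ (p - 1) := by
    intro i hi
    rw [hzsum]
    calc |∑ j ∈ S, ((σ j)⁻¹ * ((fun l => U l j) ⬝ᵥ b)) *
          ((fun l => Vhat l i) ⬝ᵥ (fun l => V l j))|
        ≤ ∑ j ∈ S, |((σ j)⁻¹ * ((fun l => U l j) ⬝ᵥ b)) *
          ((fun l => Vhat l i) ⬝ᵥ (fun l => V l j))| := Finset.abs_sum_le_sum_abs _ _
      _ ≤ ∑ j ∈ S, (enormL2 ((σ j ^ (p - 1)) • (fun l => V l j) -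
            (σhat j ^ (p - 1)) • (fun l => Vhat l j)) +
            (if i = j then σhat j ^ (p - 1) else 0)) := by
          refine Finset.sum_le_sum fun j hj => ?_
          rw [abs_mul]
          have step1 : |(σ j)⁻¹ * ((fun l => U l j) ⬝ᵥ b)| *
              |(fun l => Vhat l i) ⬝ᵥ (fun l => V l j)|
              ≤ σ j ^ (p - 1) * |(fun l => Vhat l i) ⬝ᵥ (fun l => V l j)| :=
            mul_le_mul_of_nonneg_right (hcj j hj) (abs_nonneg _)
          refine step1.trans ?_
          have key : σ j ^ (p - 1) * ((fun l => Vhat l i) ⬝ᵥ (fun l => V l j))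
              = (fun l => Vhat l i) ⬝ᵥ ((σ j ^ (p - 1)) • (fun l => V l j) -
                  (σhat j ^ (p - 1)) • (fun l => Vhat l j)) +
                σhat j ^ (p - 1) * ((fun l => Vhat l i) ⬝ᵥ (fun l => Vhat l j)) := by
            rw [dotProduct_sub, dotProduct_smul, dotProduct_smul,
              smul_eq_mul, smul_eq_mul]
            ring
          have : σ j ^ (p - 1) * |(fun l => Vhat l i) ⬝ᵥ (fun l => V l j)|
              = |σ j ^ (p - 1) * ((fun l => Vhat l i) ⬝ᵥ (fun l => V l j))| := by
            rw [abs_mul, abs_of_nonneg (Real.rpow_nonneg (hσnonneg j) _)]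
          rw [this, key]
          refine (abs_add_le _ _).trans ?_
          gcongr
          · calc |(fun l => Vhat l i) ⬝ᵥ ((σ j ^ (p - 1)) • (fun l => V l j) -
                (σhat j ^ (p - 1)) • (fun l => Vhat l j))|
                ≤ enormL2 (fun l => Vhat l i) * enormL2 ((σ j ^ (p - 1)) • (fun l => V l j) -
                    (σhat j ^ (p - 1)) • (fun l => Vhat l j)) := abs_dot_le _ _
              _ = enormL2 ((σ j ^ (p - 1)) • (fun l => V l j) -
                    (σhat j ^ (p - 1)) • (fun l => Vhat l j)) := by
                  rw [enorm_col Vhat hVhat.1, one_mul]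
          · rw [col_dot_col Vhat hVhat.1]
            by_cases hij : i = j
            · simp [hij, abs_of_nonneg (Real.rpow_nonneg (hσhatnonneg j) _)]
            · simp [hij]
      _ ≤ (∑ j ∈ S, enormL2 ((σ j ^ (p - 1)) • (fun l => V l j) -
            (σhat j ^ (p - 1)) • (fun l => Vhat l j))) + σhat ir ^ (p - 1) := by
          rw [Finset.sum_add_distrib]
          gcongr
          rw [Finset.sum_ite_eq S i (fun j => σhat j ^ (p - 1))]
          by_cases hiS : i ∈ S
          · simp only [hiS, if_true]
            apply Real.rpow_le_rpow (hσhatnonneg i) _ hp1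
            apply hσhatanti
            rw [Fin.le_def]
            simp only [hir]
            omega
          · simp only [hiS, if_false]
            positivity
  -- combined per-coordinate bound
  have hzfinal : ∀ i : Fin d, ¬ (i : ℕ) < r →
      |z i| ≤ ε + σ ir ^ (p - 1) := by
    intro i hi
    have hs : 0 ≤ σ ir ^ (p - 1) := Real.rpow_nonneg (hσnonneg ir) _
    rw [hε]
    have e1 : |z i| ≤ (k : ℝ) * σ ⟨0, by omega⟩ ^ (p - 1) + σ ir ^ (p - 1) :=
      le_add_of_le_of_nonneg (hzA i) hs
    have e2 := hzB i hi
    have := le_min e1 (by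
      calc |z i| ≤ _ := e2
        _ = ((∑ j ∈ S, enormL2 ((σ j ^ (p - 1)) • (fun l => V l j) -
            (σhat j ^ (p - 1)) • (fun l => Vhat l j))) +
            σhat ir ^ (p - 1) - σ ir ^ (p - 1)) + σ ir ^ (p - 1) := by ring)
    rw [min_add_add_right] at this
    exact this
  -- assemble
  have hsplit := enormL2_add_le (Apinv.mulVec (bt - At.mulVec wstar))
    (Apinv.mulVec (At.mulVec wstar) - wstar)
  have hdecomp : wtr - wstar = Apinv.mulVec (bt - At.mulVec wstar) +
      (Apinv.mulVec (At.mulVec wstar) - wstar) := by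
    rw [hwtr, Matrix.mulVec_sub]; abel
  have hT2 : enormL2 (Apinv.mulVec (At.mulVec wstar) - wstar)
      ≤ ((d : ℝ) - (r : ℝ)) * (ε + σ ir ^ (p - 1)) := by
    rw [hCterm, enorm_mulVec_orth Vhat hVhat.1, enormL2]
    have hsum : ∑ i : Fin d, ((c i * σhat i - 1) * z i) ^ 2
        = ∑ i ∈ Finset.univ.filter (fun i : Fin d => ¬ (i : ℕ) < r), z i ^ 2 := by
      rw [Finset.sum_filter]
      refine Finset.sum_congr rfl fun i _ => ?_
      by_cases hi : (i : ℕ) < r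
      · have hσi : σhat i ≠ 0 := by
          have hle : σhat ir ≤ σhat i := by
            apply hσhatanti; rw [Fin.le_def]; simp only [hir]; omega
          exact ne_of_gt (lt_of_lt_of_le hσr hle)
        simp [hc, hi, hσi]
      · simp [hc, hi]
    rw [hsum]
    calc Real.sqrt (∑ i ∈ Finset.univ.filter (fun i : Fin d => ¬ (i : ℕ) < r), z i ^ 2)
        ≤ ∑ i ∈ Finset.univ.filter (fun i : Fin d => ¬ (i : ℕ) < r), |z i| :=
          sqrt_sum_sq_le_sum_abs _ _
      _ ≤ ∑ i ∈ Finset.univ.filter (fun i : Fin d => ¬ (i : ℕ) < r),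
            (ε + σ ir ^ (p - 1)) := by
          refine Finset.sum_le_sum fun i hi => ?_
          exact hzfinal i (by simpa using hi)
      _ = ((d : ℝ) - (r : ℝ)) * (ε + σ ir ^ (p - 1)) := by
          rw [Finset.sum_const, nsmul_eq_mul, card_filter_not_lt' d r hrd,
            Nat.cast_sub hrd]
  calc enormL2 (wtr - wstar) ≤ enormL2 (Apinv.mulVec (bt - At.mulVec wstar)) +
        enormL2 (Apinv.mulVec (At.mulVec wstar) - wstar) := by rw [hdecomp]; exact hsplit
    _ ≤ (1 / σhat ir) * enormL2 (bt - At.mulVec wstar) +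
        ((d : ℝ) - (r : ℝ)) * (ε + σ ir ^ (p - 1)) :=
        add_le_add (hB _) hT2
    _ = (1 / σhat ir) * enormL2 (bt - At.mulVec wstar) +
        ((d : ℝ) - (r : ℝ)) * ε + ((d : ℝ) - (r : ℝ)) * σ ir ^ (p - 1) := by ring
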